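/- The space X = {(z,w) ∈ (ℂ³∖{0}) × (ℂ³∖{0}) : z·w = 0, ‖z‖² + ‖w‖² = 1}, with the subspace topology, is homotopy equivalent to the Lie group SU(3). -/

import Mathlib

/-- `ℂ³` with its Hermitian norm. -/
noncomputable abbrev C3 := EuclideanSpace ℂ (Fin 3)

/-- The bilinear dot product `z·w = z₁w₁ + z₂w₂ + z₃w₃` (no complex conjugation). -/
noncomputable def dotProd (z w : C3) : ℂ := ∑ i, z i * w i

/-- The special unitary group SU(3). -/
noncomputable abbrev SU3 := Matrix.specialUnitaryGroup (Fin 3) ℂ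

/-- The space `X = {(z,w) ∈ (ℂ³∖{0}) × (ℂ³∖{0}) : z·w = 0, ‖z‖² + ‖w‖² = 1}`. -/
def spaceX : Set (C3 × C3) :=
  {p | p.1 ≠ 0 ∧ p.2 ≠ 0 ∧ dotProd p.1 p.2 = 0 ∧ ‖p.1‖ ^ 2 + ‖p.2‖ ^ 2 = 1}

/-!
The bilinear condition `z·w = 0` says that `z` and `conj w` are orthogonal for the Hermitian
product. So for `(z, w) ∈ X` the unit vectors `z/‖z‖` and `conj w/‖w‖` are the first two rows of a
unitary matrix, and the conjugated cross product of these rows completes them to a matrix in SU(3);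
conversely every `U ∈ SU(3)` arises this way, since its adjugate is `U⁻¹ = Uᴴ`. This gives a map
`X → SU(3)` with a right inverse `SU(3) → X` (first row and conjugated second row, each rescaled
to norm `1/√2`), and the composite on `X` is homotopic to the identity by interpolating the squared
norms of `z` and `w` linearly between `1/2` and their actual values, which preserves
`‖z‖² + ‖w‖² = 1`.
-/

open Matrix

section Completion

variable {R : Type*} [CommRing R] {n : Type*} [Fintype n] [DecidableEq n]

theorem adjugate_fin_three_col_two (A : Matrix (Fin 3) (Fin 3) R) :
    (fun i => A.adjugate i 2) = A 0 ⨯₃ A 1 := by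
  ext i; fin_cases i <;> simp [adjugate_fin_three, cross_apply]; ring

variable [StarRing R]

theorem star_cross (a b : Fin 3 → R) : star (a ⨯₃ b) = star a ⨯₃ star b := by
  ext i; fin_cases i <;> simp [cross_apply, mul_comm]

def unitaryCompletion (a b : Fin 3 → R) : Matrix (Fin 3) (Fin 3) R :=
  of ![a, star b, star a ⨯₃ b]

theorem unitaryCompletion_mem_specialUnitaryGroup {a b : Fin 3 → R}
    (ha : a ⬝ᵥ star a = 1) (hb : b ⬝ᵥ star b = 1) (hab : a ⬝ᵥ b = 0) :
    unitaryCompletion a b ∈ specialUnitaryGroup (Fin 3) R := by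
  have hba : b ⬝ᵥ a = 0 := by rw [dotProduct_comm, hab]
  have hcross : (star a ⨯₃ b) ⬝ᵥ (a ⨯₃ star b) = 1 := by
    rw [cross_dot_cross, dotProduct_comm (star a), ha, hb, star_dotProduct_star, hba]
    simp
  have hrows : ∀ i j, (unitaryCompletion a b * star (unitaryCompletion a b)) i j
      = ![a, star b, star a ⨯₃ b] i ⬝ᵥ star (![a, star b, star a ⨯₃ b] j) := fun _ _ => rfl
  rw [mem_specialUnitaryGroup_iff, mem_unitaryGroup_iff]
  constructor
  · ext i j
    rw [hrows]
    fin_cases i <;> fin_cases j <;>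
      simp [star_cross, ha, hb, hab, hba, hcross, star_dotProduct_star, dotProduct_comm _ b,
        dotProduct_comm _ (star a)]
  · show det ![a, star b, star a ⨯₃ b] = 1
    rw [← triple_product_eq_det, triple_product_permutation, triple_product_permutation, hcross]

theorem adjugate_eq_star_of_mem_specialUnitaryGroup {U : Matrix n n R}
    (hU : U ∈ specialUnitaryGroup n R) : U.adjugate = star U := by
  obtain ⟨hunit, hdet⟩ := mem_specialUnitaryGroup_iff.mp hU
  calc U.adjugate = U.adjugate * (U * star U) := by rw [mem_unitaryGroup_iff.mp hunit, mul_one]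
    _ = star U := by rw [← mul_assoc, adjugate_mul, hdet, one_smul, one_mul]

theorem unitaryCompletion_eq_self_of_mem_specialUnitaryGroup {U : Matrix (Fin 3) (Fin 3) R}
    (hU : U ∈ specialUnitaryGroup (Fin 3) R) : unitaryCompletion (U 0) (star (U 1)) = U := by
  have hrow : U 2 = star (U 0 ⨯₃ U 1) := by
    rw [← adjugate_fin_three_col_two, adjugate_eq_star_of_mem_specialUnitaryGroup hU]
    ext i; simp
  funext i
  fin_cases i
  · rfl
  · exact star_star _
  · change star (U 0) ⨯₃ star (U 1) = U 2
    rw [hrow, star_cross]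

theorem row_dotProduct_star_row_of_mem_unitaryGroup {U : Matrix n n R}
    (hU : U ∈ unitaryGroup n R) (i j : n) :
    U i ⬝ᵥ star (U j) = (1 : Matrix n n R) i j :=
  congrFun (congrFun (mem_unitaryGroup_iff.mp hU) i) j

theorem row_dotProduct_star_self_of_mem_unitaryGroup {U : Matrix n n R}
    (hU : U ∈ unitaryGroup n R) (i : n) :
    U i ⬝ᵥ star (U i) = 1 := by
  rw [row_dotProduct_star_row_of_mem_unitaryGroup hU, one_apply_eq]

theorem continuous_unitaryCompletion [TopologicalSpace R] [IsTopologicalRing R]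
    [ContinuousStar R] :
    Continuous fun ab : (Fin 3 → R) × (Fin 3 → R) => unitaryCompletion ab.1 ab.2 := by
  refine continuous_pi fun i => continuous_pi fun j => ?_
  fin_cases i <;> fin_cases j <;> simp [unitaryCompletion, cross_apply] <;> fun_prop

end Completion

section EuclideanSpace

variable {𝕜 ι : Type*} [RCLike 𝕜] [Fintype ι]

theorem EuclideanSpace.ofLp_dotProduct_star_self (x : EuclideanSpace 𝕜 ι) :
    x.ofLp ⬝ᵥ star x.ofLp = ((‖x‖ ^ 2 : ℝ) : 𝕜) := by
  push_cast; exact inner_self_eq_norm_sq_to_K x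

theorem EuclideanSpace.norm_sq_toLp_eq_one {v : ι → 𝕜} (hv : v ⬝ᵥ star v = 1) :
    ‖WithLp.toLp 2 v‖ ^ 2 = 1 := by
  have h := EuclideanSpace.ofLp_dotProduct_star_self (WithLp.toLp 2 v)
  rw [WithLp.ofLp_toLp, hv, ← RCLike.ofReal_one, RCLike.ofReal_inj] at h
  exact h.symm

theorem EuclideanSpace.norm_sq_toLp_star_eq_one {v : ι → 𝕜} (hv : v ⬝ᵥ star v = 1) :
    ‖WithLp.toLp 2 (star v)‖ ^ 2 = 1 :=
  EuclideanSpace.norm_sq_toLp_eq_one (by rwa [star_star, dotProduct_comm])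

end EuclideanSpace

theorem ne_zero_of_norm_sq_eq_one {E : Type*} [NormedAddCommGroup E] {x : E} (hx : ‖x‖ ^ 2 = 1) :
    x ≠ 0 := by
  rintro rfl; simp at hx

section unitaryGroup

variable {n : Type*} [Fintype n] [DecidableEq n] {U : Matrix n n ℂ}

theorem toLp_row_ne_zero_of_mem_unitaryGroup (hU : U ∈ unitaryGroup n ℂ) (i : n) :
    (WithLp.toLp 2 (U i) : EuclideanSpace ℂ n) ≠ 0 :=
  ne_zero_of_norm_sq_eq_one
    (EuclideanSpace.norm_sq_toLp_eq_one (row_dotProduct_star_self_of_mem_unitaryGroup hU i))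

theorem toLp_star_row_ne_zero_of_mem_unitaryGroup (hU : U ∈ unitaryGroup n ℂ) (i : n) :
    (WithLp.toLp 2 (star (U i)) : EuclideanSpace ℂ n) ≠ 0 :=
  ne_zero_of_norm_sq_eq_one
    (EuclideanSpace.norm_sq_toLp_star_eq_one (row_dotProduct_star_self_of_mem_unitaryGroup hU i))

end unitaryGroup

section scale

variable {E : Type*} [NormedAddCommGroup E] [NormedSpace ℝ E]

noncomputable def scaleToNormSq (s : ℝ) (z : E) : E := (√s / ‖z‖) • z

theorem norm_scaleToNormSq_sq {s : ℝ} (hs : 0 ≤ s) {z : E} (hz : z ≠ 0) :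
    ‖scaleToNormSq s z‖ ^ 2 = s := by
  rw [scaleToNormSq, norm_smul, Real.norm_eq_abs, abs_of_nonneg (by positivity),
    div_mul_cancel₀ _ (norm_ne_zero_iff.mpr hz), Real.sq_sqrt hs]

theorem scaleToNormSq_ne_zero {s : ℝ} (hs : 0 < s) {z : E} (hz : z ≠ 0) :
    scaleToNormSq s z ≠ 0 :=
  smul_ne_zero (div_ne_zero (Real.sqrt_pos.mpr hs).ne' (norm_ne_zero_iff.mpr hz)) hz

theorem scaleToNormSq_norm_sq (z : E) : scaleToNormSq (‖z‖ ^ 2) z = z := by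
  rcases eq_or_ne z 0 with rfl | hz
  · simp [scaleToNormSq]
  · rw [scaleToNormSq, Real.sqrt_sq (norm_nonneg z), div_self (norm_ne_zero_iff.mpr hz), one_smul]

theorem scaleToNormSq_of_norm_sq_eq {s : ℝ} {z : E} (h : ‖z‖ ^ 2 = s) : scaleToNormSq s z = z :=
  h ▸ scaleToNormSq_norm_sq z

theorem scaleToNormSq_smul_of_pos (s : ℝ) {c : ℝ} (hc : 0 < c) (z : E) :
    scaleToNormSq s (c • z) = scaleToNormSq s z := by
  rw [scaleToNormSq, scaleToNormSq, norm_smul, Real.norm_eq_abs, abs_of_pos hc, smul_smul]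
  congr 1
  field_simp

theorem scaleToNormSq_scaleToNormSq (s : ℝ) {t : ℝ} (ht : 0 < t) {z : E} (hz : z ≠ 0) :
    scaleToNormSq s (scaleToNormSq t z) = scaleToNormSq s z :=
  scaleToNormSq_smul_of_pos s (div_pos (Real.sqrt_pos.mpr ht) (norm_pos_iff.mpr hz)) z

theorem Continuous.scaleToNormSq {X : Type*} [TopologicalSpace X] {s : X → ℝ} {z : X → E}
    (hs : Continuous s) (hz : Continuous z) (h0 : ∀ x, z x ≠ 0) :
    Continuous fun x => _root_.scaleToNormSq (s x) (z x) :=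
  ((hs.sqrt.div hz.norm fun x => norm_ne_zero_iff.mpr (h0 x))).smul hz

end scale

theorem dotProd_eq_dotProduct (z w : C3) : dotProd z w = z.ofLp ⬝ᵥ w.ofLp := rfl

theorem dotProd_smul_smul (a b : ℝ) (z w : C3) :
    dotProd (a • z) (b • w) = a * b * dotProd z w := by
  simp only [dotProd, Finset.mul_sum, PiLp.smul_apply, Complex.real_smul]
  exact Finset.sum_congr rfl fun i _ => by ring

theorem scaleToNormSq_mem_spaceX {z w : C3} (hz : z ≠ 0) (hw : w ≠ 0) (hzw : dotProd z w = 0)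
    {s t : ℝ} (hs : 0 < s) (ht : 0 < t) (hst : s + t = 1) :
    (scaleToNormSq s z, scaleToNormSq t w) ∈ spaceX :=
  ⟨scaleToNormSq_ne_zero hs hz, scaleToNormSq_ne_zero ht hw,
    by rw [scaleToNormSq, scaleToNormSq, dotProd_smul_smul, hzw, mul_zero],
    by rw [norm_scaleToNormSq_sq hs.le hz, norm_scaleToNormSq_sq ht.le hw, hst]⟩

theorem unitaryCompletion_scaleToNormSq_one_mem {p : C3 × C3} (hp : p ∈ spaceX) :
    unitaryCompletion (scaleToNormSq 1 p.1).ofLp (scaleToNormSq 1 p.2).ofLp ∈ SU3 := by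
  obtain ⟨hz, hw, hzw, -⟩ := hp
  have hunit : ∀ x : C3, x ≠ 0 → (scaleToNormSq 1 x).ofLp ⬝ᵥ star (scaleToNormSq 1 x).ofLp = 1 :=
    fun x hx => by
      rw [EuclideanSpace.ofLp_dotProduct_star_self, norm_scaleToNormSq_sq zero_le_one hx,
        RCLike.ofReal_one]
  exact unitaryCompletion_mem_specialUnitaryGroup (hunit _ hz) (hunit _ hw)
    (by rw [← dotProd_eq_dotProduct, scaleToNormSq, scaleToNormSq, dotProd_smul_smul, hzw,
      mul_zero])

theorem halfRows_mem_spaceX {U : Matrix (Fin 3) (Fin 3) ℂ} (hU : U ∈ unitaryGroup (Fin 3) ℂ) :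
    (scaleToNormSq 2⁻¹ (WithLp.toLp 2 (U 0) : C3),
      scaleToNormSq 2⁻¹ (WithLp.toLp 2 (star (U 1)) : C3)) ∈ spaceX := by
  refine scaleToNormSq_mem_spaceX (toLp_row_ne_zero_of_mem_unitaryGroup hU 0)
    (toLp_star_row_ne_zero_of_mem_unitaryGroup hU 1) ?_ (by norm_num) (by norm_num) (by norm_num)
  rw [dotProd_eq_dotProduct, WithLp.ofLp_toLp, WithLp.ofLp_toLp,
    row_dotProduct_star_row_of_mem_unitaryGroup hU, one_apply_ne (by decide)]

noncomputable def frameMap : C(spaceX, SU3) where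
  toFun p := ⟨unitaryCompletion (scaleToNormSq 1 p.1.1).ofLp (scaleToNormSq 1 p.1.2).ofLp,
    unitaryCompletion_scaleToNormSq_one_mem p.2⟩
  continuous_toFun := by
    have hz : Continuous fun p : spaceX => p.1.1 := by fun_prop
    have hw : Continuous fun p : spaceX => p.1.2 := by fun_prop
    refine (continuous_unitaryCompletion.comp (Continuous.prodMk ?_ ?_)).subtype_mk _
    · exact (PiLp.continuous_ofLp 2 _).comp
        (continuous_const.scaleToNormSq hz fun p => p.2.1)
    · exact (PiLp.continuous_ofLp 2 _).comp
        (continuous_const.scaleToNormSq hw fun p => p.2.2.1)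

noncomputable def halfRowsMap : C(SU3, spaceX) where
  toFun U := ⟨_, halfRows_mem_spaceX (mem_specialUnitaryGroup_iff.mp U.2).1⟩
  continuous_toFun := by
    have hU : ∀ U : SU3, U.1 ∈ unitaryGroup (Fin 3) ℂ :=
      fun U => (mem_specialUnitaryGroup_iff.mp U.2).1
    have hrow : ∀ i, Continuous fun U : SU3 => U.1 i :=
      fun i => (continuous_apply i).comp continuous_subtype_val
    refine (Continuous.prodMk ?_ ?_).subtype_mk _
    · exact continuous_const.scaleToNormSq ((PiLp.continuous_toLp 2 _).comp (hrow 0))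
        fun U => toLp_row_ne_zero_of_mem_unitaryGroup (hU U) 0
    · exact continuous_const.scaleToNormSq ((PiLp.continuous_toLp 2 _).comp (hrow 1).star)
        fun U => toLp_star_row_ne_zero_of_mem_unitaryGroup (hU U) 1

theorem frameMap_comp_halfRowsMap : frameMap.comp halfRowsMap = ContinuousMap.id SU3 := by
  ext1 U
  obtain ⟨hU, -⟩ := mem_specialUnitaryGroup_iff.mp U.2
  have h0 := EuclideanSpace.norm_sq_toLp_eq_one (row_dotProduct_star_self_of_mem_unitaryGroup hU 0)
  have h1 :=
    EuclideanSpace.norm_sq_toLp_star_eq_one (row_dotProduct_star_self_of_mem_unitaryGroup hU 1)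
  have hrenorm : ∀ v : C3, ‖v‖ ^ 2 = 1 → scaleToNormSq 1 (scaleToNormSq 2⁻¹ v) = v := fun v hv => by
    rw [scaleToNormSq_scaleToNormSq _ (by norm_num) (ne_zero_of_norm_sq_eq_one hv),
      scaleToNormSq_of_norm_sq_eq hv]
  apply Subtype.ext
  change unitaryCompletion (scaleToNormSq 1 (scaleToNormSq 2⁻¹ (WithLp.toLp 2 (U.1 0) : C3))).ofLp
    (scaleToNormSq 1 (scaleToNormSq 2⁻¹ (WithLp.toLp 2 (star (U.1 1)) : C3))).ofLp = U.1
  rw [hrenorm _ h0, hrenorm _ h1, WithLp.ofLp_toLp, WithLp.ofLp_toLp,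
    unitaryCompletion_eq_self_of_mem_specialUnitaryGroup U.2]

theorem halfRowsMap_frameMap (p : spaceX) :
    (halfRowsMap (frameMap p) : C3 × C3) = (scaleToNormSq 2⁻¹ p.1.1, scaleToNormSq 2⁻¹ p.1.2) := by
  change (scaleToNormSq 2⁻¹ (WithLp.toLp 2 (scaleToNormSq 1 p.1.1).ofLp),
    scaleToNormSq 2⁻¹ (WithLp.toLp 2 (star (star (scaleToNormSq 1 p.1.2).ofLp)))) = _
  rw [star_star, WithLp.toLp_ofLp, WithLp.toLp_ofLp, scaleToNormSq_scaleToNormSq _ one_pos p.2.1,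
    scaleToNormSq_scaleToNormSq _ one_pos p.2.2.1]

noncomputable def radialPath (t : ℝ) (p : C3 × C3) : C3 × C3 :=
  (scaleToNormSq (t * ‖p.1‖ ^ 2 + (1 - t) * 2⁻¹) p.1,
    scaleToNormSq (t * ‖p.2‖ ^ 2 + (1 - t) * 2⁻¹) p.2)

theorem radialPath_mem_spaceX {t : ℝ} (ht : t ∈ unitInterval) {p : C3 × C3} (hp : p ∈ spaceX) :
    radialPath t p ∈ spaceX := by
  obtain ⟨hz, hw, hzw, hnorm⟩ := hp
  have hpos : ∀ x : ℝ, 0 < x → 0 < t * x + (1 - t) * 2⁻¹ := fun x hx =>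
    convex_Ioi (0 : ℝ) hx (by norm_num : (0 : ℝ) < 2⁻¹) ht.1 (sub_nonneg.mpr ht.2) (by ring)
  exact scaleToNormSq_mem_spaceX hz hw hzw (hpos _ (by positivity)) (hpos _ (by positivity))
    (by linear_combination t * hnorm)

theorem radialPath_zero (p : C3 × C3) :
    radialPath 0 p = (scaleToNormSq 2⁻¹ p.1, scaleToNormSq 2⁻¹ p.2) := by
  simp [radialPath]

theorem radialPath_one (p : C3 × C3) : radialPath 1 p = p := by
  simp [radialPath, scaleToNormSq_norm_sq]

noncomputable def radialHomotopy :
    (halfRowsMap.comp frameMap).Homotopy (ContinuousMap.id spaceX) where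
  toFun q := ⟨radialPath q.1 q.2, radialPath_mem_spaceX q.1.2 q.2.2⟩
  continuous_toFun := by
    have hz : Continuous fun q : unitInterval × spaceX => q.2.1.1 := by fun_prop
    have hw : Continuous fun q : unitInterval × spaceX => q.2.1.2 := by fun_prop
    refine (Continuous.prodMk ?_ ?_).subtype_mk _
    · exact Continuous.scaleToNormSq (by fun_prop) hz fun q => q.2.2.1
    · exact Continuous.scaleToNormSq (by fun_prop) hw fun q => q.2.2.2.1
  map_zero_left p := Subtype.ext ((radialPath_zero p).trans (halfRowsMap_frameMap p).symm)
  map_one_left p := Subtype.ext (radialPath_one p)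

theorem X_homotopyEquiv_SU3 :
    Nonempty (ContinuousMap.HomotopyEquiv spaceX SU3) :=
  ⟨{ toFun := frameMap
     invFun := halfRowsMap
     left_inv := ⟨radialHomotopy⟩
     right_inv := frameMap_comp_halfRowsMap ▸ ContinuousMap.Homotopic.refl _ }⟩
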